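/- arXiv:2302.05509 — 2 statements merged into one kernel-verified Lean document; each statement's English description precedes it below -/
import Mathlib

section
/- Let E be a finite totally ordered set and d ≥ 1. Let χ be a chirotope of rank d on E and I an initial datum. Then D̃(χ,I) is nonempty if and only if I is compatible with χ, i.e., (a) there exists a tropical Plücker vector φ with underlying matroid |χ| and I_φ = I, and (b) for every pair (X,Y) ∈ binom(E,d+1) × binom(E,d−1), listed in increasing order, with s_k = (−1)^k χ(x₁,…,x̂_k,…,x_{d+1})χ(x_k,y₁,…,y_{d−1}), either all s_k are zero, or there exist indices k₊ and k₋ with x_{k₊}, x_{k₋} ∈ I(X,Y), s_{k₊} = +1 and s_{k₋} = −1. -/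
open Finset

noncomputable section

/-! ### Alternating functions and oriented tropical Plücker vectors -/

/-- A function `Φ : E^d → ℝ` is alternating. -/
def IsAlternating {E : Type*} {d : ℕ} (Φ : (Fin d → E) → ℝ) : Prop :=
  (∀ (σ : Equiv.Perm (Fin d)) (x : Fin d → E),
      Φ (x ∘ σ) = ((Equiv.Perm.sign σ : ℤ) : ℝ) * Φ x) ∧
  ∀ x : Fin d → E, ¬ Function.Injective x → Φ x = 0

/-- The `i`-th term `(-1)^i · Φ(x₁,…,x̂ᵢ,…,x_{d+1}) · Φ(xᵢ,y₁,…,y_{d-1})` of the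
oriented (tropical) Plücker relation attached to tuples `X ∈ E^{d+1}`, `Y ∈ E^{d-1}`. -/
def delTerm {E : Type*} {d n : ℕ} (hn : d = n + 1) (Φ : (Fin d → E) → ℝ)
    (X : Fin (d + 1) → E) (Y : Fin n → E) (i : Fin (d + 1)) : ℝ :=
  (-1 : ℝ) ^ (i : ℕ) * Φ (X ∘ i.succAbove) * Φ (Fin.cons (X i) Y ∘ Fin.cast hn)

/-- `Φ : E^d → ℝ` is an oriented tropical Plücker vector of rank `d` on `E`:
it is alternating, not identically zero, and for every `X ∈ E^{d+1}`, `Y ∈ E^{d-1}`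
the list of terms of the Plücker relation is identically zero or its maximum absolute
value is attained both at a positive entry and at a negative entry. -/
def IsOrientedTP {E : Type*} (d : ℕ) (Φ : (Fin d → E) → ℝ) : Prop :=
  IsAlternating Φ ∧ (∃ x, Φ x ≠ 0) ∧
  ∀ (n : ℕ) (hn : d = n + 1) (X : Fin (d + 1) → E) (Y : Fin n → E),
    (∀ i, delTerm hn Φ X Y i = 0) ∨
    ∃ ip im : Fin (d + 1),
      0 < delTerm hn Φ X Y ip ∧ delTerm hn Φ X Y im < 0 ∧
      (∀ k, |delTerm hn Φ X Y k| ≤ delTerm hn Φ X Y ip) ∧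
      ∀ k, |delTerm hn Φ X Y k| ≤ -delTerm hn Φ X Y im

/-- `M̃(d,E)`: the space of oriented tropical Plücker vectors of rank `d` on `E`,
as a subset of `ℝ^{E^d}`. -/
def Mt (d : ℕ) (E : Type*) : Set ((Fin d → E) → ℝ) := {Φ | IsOrientedTP d Φ}

open Classical in
/-- Pushforward of `Φ : E^d → ℝ` along an (injective) map `α : E → F`. -/
noncomputable def pushforward {E F : Type*} {d : ℕ} (α : E → F) (Φ : (Fin d → E) → ℝ) :
    (Fin d → F) → ℝ :=
  fun y => if h : ∃ x : Fin d → E, ∀ i, y i = α (x i) then Φ h.choose else 0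

/-! ### Finsets, ordered tuples, evaluation -/

/-- The increasing enumeration of a `d`-element finite subset of a linearly ordered set. -/
def finsetTuple {E : Type*} [LinearOrder E] {d : ℕ} (B : Finset E) (h : B.card = d) :
    Fin d → E :=
  fun i => (B.orderIsoOfFin h i : E)

/-- Evaluation of an alternating function on a finite set, via its increasing enumeration
(and `0` if the set does not have the right cardinality). -/
noncomputable def evalOn {E : Type*} [LinearOrder E] {d : ℕ} (χ : (Fin d → E) → ℝ)
    (B : Finset E) : ℝ :=
  if h : B.card = d then χ (finsetTuple B h) else 0

/-! ### Tropical numbers and valuated matroids -/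

/-- `−log|x| ∈ 𝕋 = ℝ ∪ {∞}` (with `−log 0 = ∞`). -/
noncomputable def negLogAbs (x : ℝ) : WithTop ℝ :=
  if x = 0 then ⊤ else ((- Real.log |x| : ℝ) : WithTop ℝ)

/-- The map `𝕋 → ℝ`, `x ↦ e^{−x}` (with `∞ ↦ 0`); it is injective with image `[0,∞)`,
so the topology on `𝕋` making it a homeomorphism onto `[0,∞)` is the topology induced by it. -/
noncomputable def tropToReal : WithTop ℝ → ℝ :=
  WithTop.recTopCoe 0 fun r => Real.exp (-r)

/-- `I_φ(X,Y)`: the set of `i ∈ X \ Y` attaining the minimum of `φ(X∖{i}) + φ(Y∪{i})`. -/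
def argminSet {E : Type*} [DecidableEq E] (φ : Finset E → WithTop ℝ) (X Y : Finset E) :
    Set E :=
  {i | i ∈ X \ Y ∧ ∀ j ∈ X \ Y,
    φ (X.erase i) + φ (insert i Y) ≤ φ (X.erase j) + φ (insert j Y)}

/-- `φ` is a tropical Plücker vector of rank `d`: not identically `∞` on `binom(E,d)`,
and each `I_φ(X,Y)` has cardinality at least `2`. -/
def IsTropPlucker {E : Type*} [DecidableEq E] (d : ℕ) (φ : Finset E → WithTop ℝ) : Prop :=
  (∃ B : Finset E, B.card = d ∧ φ B ≠ ⊤) ∧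
  ∀ X Y : Finset E, X.card = d + 1 → Y.card = d - 1 →
    ∃ i ∈ argminSet φ X Y, ∃ j ∈ argminSet φ X Y, i ≠ j

/-- The (tropical) Plücker coordinates `B ↦ −log|Φ(B)|` of `Φ`. -/
noncomputable def tropOf {E : Type*} [LinearOrder E] {d : ℕ} (Φ : (Fin d → E) → ℝ) :
    Finset E → WithTop ℝ :=
  fun B => negLogAbs (evalOn Φ B)

/-! ### Chirotopes -/

/-- A chirotope of rank `d` on `E`: an alternating `{−1,0,+1}`-valued function,
not identically zero, satisfying the chirotope exchange condition. -/
def IsChirotope {E : Type*} (d : ℕ) (χ : (Fin d → E) → ℝ) : Prop :=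
  (∀ x, χ x = -1 ∨ χ x = 0 ∨ χ x = 1) ∧ IsAlternating χ ∧ (∃ x, χ x ≠ 0) ∧
  ∀ (n : ℕ) (hn : d = n + 1) (X : Fin (d + 1) → E) (Y : Fin n → E),
    (∀ k, delTerm hn χ X Y k = 0) ∨
    ((∃ k, delTerm hn χ X Y k = 1) ∧ ∃ k, delTerm hn χ X Y k = -1)

/-- Compatibility of a chirotope `χ` with a tropical Plücker vector `φ`:
`φ(B) = ∞` iff `χ(B) = 0`, and for every `X ∈ binom(E,d+1)`, `Y ∈ binom(E,d-1)`
(listed in increasing order) there exist indices `i, j` in the argmin set such that the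
corresponding chirotope terms have opposite signs. -/
def ChiCompat {E : Type*} [LinearOrder E] (d : ℕ) (χ : (Fin d → E) → ℝ)
    (φ : Finset E → WithTop ℝ) : Prop :=
  (∀ B : Finset E, B.card = d → (φ B = ⊤ ↔ evalOn χ B = 0)) ∧
  ∀ (n : ℕ) (hn : d = n + 1) (X Y : Finset E) (hX : X.card = d + 1) (hY : Y.card = n),
    ∃ i j : Fin (d + 1),
      (∀ k : Fin (d + 1),
        φ (X.erase (finsetTuple X hX i)) + φ (insert (finsetTuple X hX i) Y) ≤
          φ (X.erase (finsetTuple X hX k)) + φ (insert (finsetTuple X hX k) Y)) ∧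
      (∀ k : Fin (d + 1),
        φ (X.erase (finsetTuple X hX j)) + φ (insert (finsetTuple X hX j) Y) ≤
          φ (X.erase (finsetTuple X hX k)) + φ (insert (finsetTuple X hX k) Y)) ∧
      0 < delTerm hn χ (finsetTuple X hX) (finsetTuple Y hY) i ∧
      delTerm hn χ (finsetTuple X hX) (finsetTuple Y hY) j < 0

/-! ### The cells `C(p,I)` of the Dressian -/

/-- Membership in the cell `C(p,I)`: a tropical Plücker vector with underlying matroid `p`
and initial datum `I`. -/
def IsInC {E : Type*} [DecidableEq E] (d : ℕ) (p : Finset E → Bool)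
    (I : Finset E → Finset E → Set E) (φ : Finset E → WithTop ℝ) : Prop :=
  IsTropPlucker d φ ∧
  (∀ B : Finset E, B.card = d → (p B = true ↔ φ B ≠ ⊤)) ∧
  ∀ X Y : Finset E, X.card = d + 1 → Y.card = d - 1 → argminSet φ X Y = I X Y

/-- The support (set of bases) of a matroid `p : binom(E,d) → {0,1}`. -/
def suppSet {E : Type*} (d : ℕ) (p : Finset E → Bool) : Set (Finset E) :=
  {B | B.card = d ∧ p B = true}

open Classical in
/-- Extend a vector of finite coordinates on `supp(p)` to all of `binom(E,d)` by `∞`. -/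
noncomputable def extendFin {E : Type*} (d : ℕ) (p : Finset E → Bool)
    (f : ↥(suppSet d p) → ℝ) : Finset E → WithTop ℝ :=
  fun B => if h : B ∈ suppSet d p then ((f ⟨B, h⟩ : ℝ) : WithTop ℝ) else ⊤

/-- The cell `C(p,I)`, identified with a subset of `ℝ^{supp(p)}` by recording the finite
coordinates. -/
def CRealCoords {E : Type*} [DecidableEq E] (d : ℕ) (p : Finset E → Bool)
    (I : Finset E → Finset E → Set E) : Set (↥(suppSet d p) → ℝ) :=
  {f | IsInC d p I (extendFin d p f)}

/-- Extend `φ : binom(E,d) → 𝕋` to all finite subsets by `∞`. -/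
noncomputable def extendTrop {E : Type*} (d : ℕ)
    (φ : {B : Finset E // B.card = d} → WithTop ℝ) : Finset E → WithTop ℝ :=
  fun B => if h : B.card = d then φ ⟨B, h⟩ else ⊤

/-- The cell `C(p,I)` as a subset of `𝕋^{binom(E,d)}`. -/
def Cset {E : Type*} [DecidableEq E] (d : ℕ) (p : Finset E → Bool)
    (I : Finset E → Finset E → Set E) : Set ({B : Finset E // B.card = d} → WithTop ℝ) :=
  {φ | IsInC d p I (extendTrop d φ)}

/-- The set of tropical Plücker vectors inside `𝕋^{binom(E,d)}`. -/
def TPVset {E : Type*} [DecidableEq E] (d : ℕ) :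
    Set ({B : Finset E // B.card = d} → WithTop ℝ) :=
  {φ | IsTropPlucker d (extendTrop d φ)}

/-! ### Cells of the space of oriented valuated matroids -/

/-- The cell `D̃(χ,I)`: oriented tropical Plücker vectors with chirotope `χ` and
initial datum `I`. -/
def Dset {E : Type*} [LinearOrder E] (d : ℕ) (χ : (Fin d → E) → ℝ)
    (I : Finset E → Finset E → Set E) : Set ((Fin d → E) → ℝ) :=
  {Φ | IsOrientedTP d Φ ∧ (∀ x, Real.sign (Φ x) = χ x) ∧
    ∀ X Y : Finset E, X.card = d + 1 → Y.card = d - 1 → argminSet (tropOf Φ) X Y = I X Y}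

/-- The Plücker coordinates of an alternating function, indexed by `binom(E,d)`. -/
def toCoords {E : Type*} [LinearOrder E] (d : ℕ) (Φ : (Fin d → E) → ℝ) :
    {B : Finset E // B.card = d} → ℝ :=
  fun B => Φ (finsetTuple B.1 B.2)

/-- The cell `D̃(χ,I)` inside `ℝ^{binom(E,d)}`. -/
def DsetCoords {E : Type*} [LinearOrder E] (d : ℕ) (χ : (Fin d → E) → ℝ)
    (I : Finset E → Finset E → Set E) : Set ({B : Finset E // B.card = d} → ℝ) :=
  toCoords d '' Dset d χ I

/-- `M̃(d,E)` inside `ℝ^{binom(E,d)}`. -/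
def MtCoords {E : Type*} [LinearOrder E] (d : ℕ) :
    Set ({B : Finset E // B.card = d} → ℝ) :=
  toCoords d '' Mt d E

open Classical in
/-- The underlying matroid `|χ|` of a chirotope, as `binom(E,d) → {0,1}`. -/
noncomputable def chiSupp {E : Type*} [LinearOrder E] {d : ℕ} (χ : (Fin d → E) → ℝ) :
    Finset E → Bool :=
  fun B => if evalOn χ B = 0 then false else true

/-- Compatibility of an initial datum `I` with a chirotope `χ`. -/
def InitCompat {E : Type*} [LinearOrder E] (d : ℕ)
    (I : Finset E → Finset E → Set E) (χ : (Fin d → E) → ℝ) : Prop :=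
  (∃ φ : Finset E → WithTop ℝ, IsTropPlucker d φ ∧
      (∀ B : Finset E, B.card = d → (φ B ≠ ⊤ ↔ evalOn χ B ≠ 0)) ∧
      ∀ X Y : Finset E, X.card = d + 1 → Y.card = d - 1 → argminSet φ X Y = I X Y) ∧
  ∀ (n : ℕ) (hn : d = n + 1) (X Y : Finset E) (hX : X.card = d + 1) (hY : Y.card = n),
    (∀ k, delTerm hn χ (finsetTuple X hX) (finsetTuple Y hY) k = 0) ∨
    ∃ kp km : Fin (d + 1),
      finsetTuple X hX kp ∈ I X Y ∧ finsetTuple X hX km ∈ I X Y ∧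
      delTerm hn χ (finsetTuple X hX) (finsetTuple Y hY) kp = 1 ∧
      delTerm hn χ (finsetTuple X hX) (finsetTuple Y hY) km = -1

/-- The maximal initial datum `I_max^χ` compatible with a chirotope `χ`. -/
def Imax {E : Type*} [LinearOrder E] (d : ℕ) (χ : (Fin d → E) → ℝ) :
    Finset E → Finset E → Set E :=
  fun X Y => {x | x ∈ X \ Y ∧ |evalOn χ (X.erase x)| * |evalOn χ (insert x Y)| ≠ 0}

/-! ### The MacPhersonian as a preordered set -/

/-- `τ` is a specialization of `χ`: each Plücker coordinate of `τ` is the corresponding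
coordinate of `χ` or `0`. -/
def SpecRel {E : Type*} [LinearOrder E] (d : ℕ) (χ τ : (Fin d → E) → ℝ) : Prop :=
  ∀ B : Finset E, B.card = d → evalOn τ B = evalOn χ B ∨ evalOn τ B = 0

/-- The equivalence `χ ∼ −χ` on functions `E^d → ℝ`. -/
def ChiSetoid (E : Type*) (d : ℕ) : Setoid ((Fin d → E) → ℝ) where
  r χ τ := τ = χ ∨ τ = -χ
  iseqv := by
    refine ⟨fun x => Or.inl rfl, ?_, ?_⟩
    · rintro x y (rfl | rfl)
      · exact Or.inl rfl
      · exact Or.inr (neg_neg x).symm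
    · rintro x y z (rfl | rfl) (rfl | rfl)
      · exact Or.inl rfl
      · exact Or.inr rfl
      · exact Or.inr rfl
      · exact Or.inl (neg_neg x)

/-- The MacPhersonian: elements are equivalence classes `[χ]` of chirotopes of rank `d` on
`E` under `χ ∼ −χ`. -/
def MacP (E : Type*) (d : ℕ) : Type _ :=
  {q : Quotient (ChiSetoid E d) // ∃ χ, IsChirotope d χ ∧ Quotient.mk (ChiSetoid E d) χ = q}

lemma evalOn_neg {E : Type*} [LinearOrder E] {d : ℕ} (χ : (Fin d → E) → ℝ) (B : Finset E) :
    evalOn (-χ) B = -evalOn χ B := by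
  unfold evalOn
  split <;> simp

/-- The specialization preorder on the MacPhersonian. -/
instance MacP.instPreorder (E : Type*) [LinearOrder E] (d : ℕ) : Preorder (MacP E d) where
  le x y := ∃ a b : (Fin d → E) → ℝ,
    Quotient.mk (ChiSetoid E d) a = x.1 ∧ Quotient.mk (ChiSetoid E d) b = y.1 ∧ SpecRel d a b
  le_refl x := by
    obtain ⟨χ, hχ, hq⟩ := x.2
    exact ⟨χ, χ, hq, hq, fun B _ => Or.inl rfl⟩
  le_trans x y z hxy hyz := by
    obtain ⟨a, b, ha, hb, hab⟩ := hxy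
    obtain ⟨b', c, hb', hc, hbc⟩ := hyz
    have comp : ∀ {u v w : (Fin d → E) → ℝ}, SpecRel d u v → SpecRel d v w → SpecRel d u w := by
      intro u v w h1 h2 B hB
      rcases h2 B hB with h | h
      · rw [h]; exact h1 B hB
      · exact Or.inr h
    have hneg : ∀ {u v : (Fin d → E) → ℝ}, SpecRel d u v → SpecRel d (-u) (-v) := by
      intro u v h B hB
      rw [evalOn_neg, evalOn_neg]
      rcases h B hB with h1 | h1
      · exact Or.inl (by rw [h1])
      · exact Or.inr (by rw [h1, neg_zero])
    have hbb' : b = b' ∨ b = -b' := Quotient.exact (hb'.trans hb.symm)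
    rcases hbb' with h | h
    · subst h
      exact ⟨a, c, ha, hc, comp hab hbc⟩
    · have h1 : SpecRel d b (-c) := by
        have := hneg hbc
        rwa [← h] at this
      refine ⟨a, -c, ha, ?_, comp hab h1⟩
      rw [← hc]
      exact Quotient.sound (Or.inr (neg_neg c).symm)

/-! ### Projectivizations -/

/-- The scaling equivalence on a subset `S ⊆ ℝ^ι`. -/
def scalingSetoid {ι : Type*} (S : Set (ι → ℝ)) : Setoid ↥S where
  r f g := ∃ c : ℝ, c ≠ 0 ∧ (g : ι → ℝ) = c • (f : ι → ℝ)
  iseqv := by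
    refine ⟨fun f => ⟨1, one_ne_zero, (one_smul ℝ _).symm⟩, ?_, ?_⟩
    · rintro f g ⟨c, hc, h⟩
      exact ⟨c⁻¹, inv_ne_zero hc, by rw [h, smul_smul, inv_mul_cancel₀ hc, one_smul]⟩
    · rintro f g h ⟨c, hc, h1⟩ ⟨c', hc', h2⟩
      exact ⟨c' * c, mul_ne_zero hc' hc, by rw [h2, h1, smul_smul]⟩

/-! ### Matroids on the ground set ℕ -/

/-- `Φ : ℕ^d → ℝ` is finitely supported. -/
def FinSupp (d : ℕ) (Φ : (Fin d → ℕ) → ℝ) : Prop :=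
  ∃ S : Finset ℕ, ∀ x : Fin d → ℕ, (∃ i, x i ∉ S) → Φ x = 0

/-- `M̃(d,ℕ)`: finitely supported oriented tropical Plücker vectors of rank `d` on `ℕ`. -/
def MtN (d : ℕ) : Set ((Fin d → ℕ) → ℝ) := {Φ | IsOrientedTP d Φ ∧ FinSupp d Φ}

/-- `M(d,ℕ)`: the projectivization of `M̃(d,ℕ)`, with the quotient topology. -/
abbrev MprojN (d : ℕ) := Quotient (scalingSetoid (MtN d))

/-- Transport along an equality of ranks. -/
def recast {m n : ℕ} (h : m = n) (Φ : (Fin m → ℕ) → ℝ) : (Fin n → ℕ) → ℝ :=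
  fun y => Φ (y ∘ Fin.cast h)

/-! ### Matroid sliding -/

open Classical in
/-- The slide `Φ_t^A` of `Φ` along a tuple `A` of injective maps `E → F` with pairwise
disjoint images, at a point `t` of the standard simplex. -/
noncomputable def slide {E F : Type*} {d n : ℕ} (A : Fin (n + 1) → E → F)
    (t : Fin (n + 1) → ℝ) (Φ : (Fin d → E) → ℝ) : (Fin d → F) → ℝ :=
  fun x =>
    if h : ∀ i, ∃ k e, x i = A k e then
      Φ (fun i => (h i).choose_spec.choose) *
        ∏ k : Fin (n + 1), t k ^ (Finset.univ.filter fun i : Fin d => ∃ e, x i = A k e).card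
    else 0

/-! ### Direct sums -/

/-- `D` is the direct sum `Φ₁ ⊕ Φ₂`: the unique alternating function on
`(E₁ ⊔ E₂)^{d₁+d₂}` vanishing on tuples not having exactly `d₁` entries from `E₁` and
`d₂` entries from `E₂`, and restricting to `(x,y) ↦ Φ₁(x)·Φ₂(y)` on `E₁^{d₁} × E₂^{d₂}`. -/
def IsDirectSum {E₁ E₂ : Type*} {d₁ d₂ : ℕ} (Φ₁ : (Fin d₁ → E₁) → ℝ)
    (Φ₂ : (Fin d₂ → E₂) → ℝ) (D : (Fin (d₁ + d₂) → E₁ ⊕ E₂) → ℝ) : Prop :=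
  IsAlternating D ∧
  (∀ z : Fin (d₁ + d₂) → E₁ ⊕ E₂,
      ¬ ((Finset.univ.filter fun i => (z i).isLeft = true).card = d₁ ∧
          (Finset.univ.filter fun i => (z i).isRight = true).card = d₂) → D z = 0) ∧
  ∀ (x : Fin d₁ → E₁) (y : Fin d₂ → E₂),
    D (Sum.elim (fun a => Sum.inl (x a)) (fun b => Sum.inr (y b)) ∘ finSumFinEquiv.symm) =
      Φ₁ x * Φ₂ y

/-! ### Tropical projective space -/

private lemma trop_add_cancel (w : WithTop ℝ) (lam : ℝ) :
    w = w + (lam : WithTop ℝ) + ((-lam : ℝ) : WithTop ℝ) := by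
  induction w using WithTop.recTopCoe with
  | top => simp
  | coe r => rw [← WithTop.coe_add, ← WithTop.coe_add, WithTop.coe_inj]; ring

/-- The action of `(ℝ,+)` on `𝕋^n ∖ {(∞,…,∞)}` by simultaneous translation. -/
def tropProjSetoid (n : ℕ) : Setoid {x : Fin n → WithTop ℝ // ∃ i, x i ≠ ⊤} where
  r x y := ∃ lam : ℝ, ∀ i, (y : Fin n → WithTop ℝ) i = x.1 i + (lam : WithTop ℝ)
  iseqv := by
    refine ⟨fun x => ⟨0, fun i => by simp⟩, ?_, ?_⟩
    · rintro x y ⟨lam, h⟩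
      refine ⟨-lam, fun i => ?_⟩
      rw [h i]
      exact trop_add_cancel _ _
    · rintro x y z ⟨lam, h1⟩ ⟨mu, h2⟩
      refine ⟨lam + mu, fun i => ?_⟩
      rw [h2 i, h1 i, WithTop.coe_add, add_assoc]



/-!
If `Φ ∈ D̃(χ, I)`, then `φ = -log|Φ|` is the required tropical Plücker vector: as `|Φ| = e^{-φ}`,
the terms of a Plücker relation of maximal absolute value are exactly those indexed by
`I_φ(X, Y)`, and the signs of the terms of `Φ` are those of the terms of `χ`.
Conversely, given `φ`, the function `Φ = χ · e^{-φ}` is alternating with sign `χ` and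
`-log|Φ| = φ`. For increasingly ordered `X` and `Y`, condition (b) provides entries of `I(X, Y)`,
hence of maximal absolute value, of both signs; sorting transports this to all tuples.
-/

lemma Real.sign_mul (a b : ℝ) : Real.sign (a * b) = Real.sign a * Real.sign b := by
  rcases lt_trichotomy a 0 with ha | ha | ha <;> rcases lt_trichotomy b 0 with hb | hb | hb <;>
    simp [ha, hb, Real.sign_of_neg, Real.sign_of_pos, Real.sign_zero, mul_pos_of_neg_of_neg,
      mul_neg_of_neg_of_pos, mul_neg_of_pos_of_neg]

lemma Real.sign_eq_one_iff {r : ℝ} : Real.sign r = 1 ↔ 0 < r := by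
  rcases lt_trichotomy r 0 with h | h | h
  · norm_num [Real.sign_of_neg h, h.not_gt]
  · simp [h, Real.sign_zero]
  · simp [Real.sign_of_pos h, h]

lemma Real.sign_eq_neg_one_iff {r : ℝ} : Real.sign r = -1 ↔ r < 0 := by
  rcases lt_trichotomy r 0 with h | h | h
  · simp [Real.sign_of_neg h, h]
  · simp [h, Real.sign_zero]
  · norm_num [Real.sign_of_pos h, h.not_gt]

lemma Real.sign_neg_one_pow (k : ℕ) : Real.sign ((-1) ^ k) = (-1) ^ k := by
  rcases neg_one_pow_eq_or ℝ k with h | h <;> simp [h, Real.sign_one, Real.sign_neg]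

section Tropical

@[simp] lemma tropToReal_top : tropToReal ⊤ = 0 := rfl

@[simp] lemma tropToReal_coe (r : ℝ) : tropToReal r = Real.exp (-r) := rfl

lemma tropToReal_nonneg (x : WithTop ℝ) : 0 ≤ tropToReal x := by
  induction x using WithTop.recTopCoe <;> simp [Real.exp_nonneg]

lemma tropToReal_pos {x : WithTop ℝ} (hx : x ≠ ⊤) : 0 < tropToReal x := by
  lift x to ℝ using hx
  exact Real.exp_pos _

lemma tropToReal_eq_zero_iff {x : WithTop ℝ} : tropToReal x = 0 ↔ x = ⊤ :=
  ⟨fun h => by_contra fun hx => (tropToReal_pos hx).ne' h, fun h => h ▸ rfl⟩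

lemma tropToReal_add (a b : WithTop ℝ) : tropToReal (a + b) = tropToReal a * tropToReal b := by
  induction a using WithTop.recTopCoe <;> induction b using WithTop.recTopCoe <;>
    simp [← WithTop.coe_add, ← Real.exp_add, add_comm]

lemma tropToReal_le_tropToReal {a b : WithTop ℝ} : tropToReal a ≤ tropToReal b ↔ b ≤ a := by
  induction a using WithTop.recTopCoe <;> induction b using WithTop.recTopCoe <;>
    simp [(Real.exp_pos _).not_ge, Real.exp_nonneg]

lemma tropToReal_injective : Function.Injective tropToReal := fun _ _ h =>
  le_antisymm (tropToReal_le_tropToReal.1 h.ge) (tropToReal_le_tropToReal.1 h.le)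

lemma tropToReal_negLogAbs (x : ℝ) : tropToReal (negLogAbs x) = |x| := by
  by_cases hx : x = 0
  · simp [negLogAbs, hx]
  · rw [negLogAbs, if_neg hx, tropToReal_coe, neg_neg, Real.exp_log (abs_pos.2 hx)]

lemma negLogAbs_eq_iff {x : ℝ} {v : WithTop ℝ} : negLogAbs x = v ↔ |x| = tropToReal v := by
  rw [← tropToReal_negLogAbs, tropToReal_injective.eq_iff]

end Tropical

section Tuples

variable {E : Type*} [LinearOrder E] {d : ℕ}

lemma finsetTuple_injective (B : Finset E) (h : B.card = d) :
    Function.Injective (finsetTuple B h) := fun _ _ hab =>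
  (B.orderIsoOfFin h).injective (Subtype.ext hab)

lemma finsetTuple_mem (B : Finset E) (h : B.card = d) (i : Fin d) : finsetTuple B h i ∈ B :=
  (B.orderIsoOfFin h i).2

lemma exists_finsetTuple_eq {B : Finset E} (h : B.card = d) {x : E} (hx : x ∈ B) :
    ∃ i, finsetTuple B h i = x :=
  ⟨(B.orderIsoOfFin h).symm ⟨x, hx⟩,
    congrArg Subtype.val ((B.orderIsoOfFin h).apply_symm_apply ⟨x, hx⟩)⟩

lemma image_finsetTuple (B : Finset E) (h : B.card = d) : univ.image (finsetTuple B h) = B := by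
  ext x
  simpa using ⟨fun ⟨i, hi⟩ => hi ▸ finsetTuple_mem B h i, exists_finsetTuple_eq h⟩

lemma finsetTuple_eq_of_strictMono {B : Finset E} (h : B.card = d) {f : Fin d → E}
    (hf : ∀ i, f i ∈ B) (hmono : StrictMono f) : finsetTuple B h = f := by
  funext i
  rw [finsetTuple, coe_orderIsoOfFin_apply, orderEmbOfFin_unique h hf hmono]

lemma exists_perm_eq_finsetTuple_comp {Z : Fin d → E} (hZ : Function.Injective Z)
    (h : (univ.image Z).card = d) : ∃ σ : Equiv.Perm (Fin d), Z = finsetTuple _ h ∘ σ := by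
  refine ⟨(Tuple.sort Z).symm, ?_⟩
  rw [finsetTuple_eq_of_strictMono h (fun i => mem_image_of_mem _ (mem_univ _))
    ((Tuple.monotone_sort Z).strictMono_of_injective (hZ.comp (Tuple.sort Z).injective))]
  ext i
  simp

lemma card_image_univ_eq_iff {Z : Fin d → E} : (univ.image Z).card = d ↔ Function.Injective Z := by
  rw [← Set.injOn_univ, ← coe_univ, ← card_image_iff, card_univ, Fintype.card_fin]

lemma image_finsetTuple_comp_succAbove (X : Finset E) (hX : X.card = d + 1) (k : Fin (d + 1)) :
    univ.image (finsetTuple X hX ∘ k.succAbove) = X.erase (finsetTuple X hX k) := by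
  have hsucc : univ.image k.succAbove = univ.erase k := by ext; simp
  rw [← image_image, hsucc, image_erase (finsetTuple_injective X hX), image_finsetTuple]

lemma image_cons {n : ℕ} (a : E) (Y : Fin n → E) :
    univ.image (Fin.cons a Y : Fin (n + 1) → E) = insert a (univ.image Y) := by
  ext x
  simp [Fin.exists_fin_succ, eq_comm]

end Tuples

section Alternating

variable {E : Type*}

lemma IsAlternating.abs_apply [LinearOrder E] {d : ℕ} {Ψ : (Fin d → E) → ℝ} (hΨ : IsAlternating Ψ)
    (Z : Fin d → E) : |Ψ Z| = |evalOn Ψ (univ.image Z)| := by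
  by_cases hZ : Function.Injective Z
  · have h := card_image_univ_eq_iff.2 hZ
    obtain ⟨σ, hσ⟩ := exists_perm_eq_finsetTuple_comp hZ h
    conv_lhs => rw [hσ]
    rw [hΨ.1, evalOn, dif_pos h, abs_mul, abs_unit_intCast, one_mul]
  · rw [hΨ.2 Z hZ, evalOn, dif_neg (mt card_image_univ_eq_iff.1 hZ)]

lemma IsAlternating.apply_eq_zero_iff [LinearOrder E] {d : ℕ} {Ψ : (Fin d → E) → ℝ}
    (hΨ : IsAlternating Ψ) (Z : Fin d → E) : Ψ Z = 0 ↔ evalOn Ψ (univ.image Z) = 0 := by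
  rw [← abs_eq_zero, hΨ.abs_apply, abs_eq_zero]

lemma IsAlternating.abs_apply_eq_tropToReal [LinearOrder E] {d : ℕ} {Φ : (Fin d → E) → ℝ}
    (hΦ : IsAlternating Φ) (Z : Fin d → E) : |Φ Z| = tropToReal (tropOf Φ (univ.image Z)) := by
  rw [tropOf, tropToReal_negLogAbs, hΦ.abs_apply]

lemma delTerm_eq {n : ℕ} (hn : n + 1 = n + 1) (Φ : (Fin (n + 1) → E) → ℝ)
    (X : Fin (n + 1 + 1) → E) (Y : Fin n → E) (i : Fin (n + 1 + 1)) :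
    delTerm hn Φ X Y i = (-1) ^ (i : ℕ) * Φ (X ∘ i.succAbove) * Φ (Fin.cons (X i) Y) :=
  rfl

/-- Conjugating `σ` by the cycles that move `i` and `σ i` to the front gives a permutation fixing
`0`; its restriction `ρ` relates the two deleted tuples, and `sign ρ` absorbs `(-1)^i (-1)^(σ i)`. -/
lemma IsAlternating.neg_one_pow_mul_apply_comp_perm_succAbove {n : ℕ}
    {Φ : (Fin n → E) → ℝ} (hΦ : IsAlternating Φ) (σ : Equiv.Perm (Fin (n + 1)))
    (X : Fin (n + 1) → E) (i : Fin (n + 1)) :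
    (-1) ^ (i : ℕ) * Φ ((X ∘ σ) ∘ i.succAbove)
      = (Equiv.Perm.sign σ : ℤ) * ((-1) ^ (σ i : ℕ) * Φ (X ∘ (σ i).succAbove)) := by
  set π : Equiv.Perm (Fin (n + 1)) := (σ i).cycleRange * σ * i.cycleRange⁻¹ with hπ
  have hπ0 : π 0 = 0 := by simp [hπ, Equiv.Perm.mul_apply, Equiv.Perm.inv_def]
  obtain ⟨ρ, hρ⟩ : ∃ ρ : Equiv.Perm (Fin n), π = Equiv.Perm.decomposeFin.symm (0, ρ) := by
    obtain ⟨⟨p, ρ⟩, h⟩ := Equiv.Perm.decomposeFin.symm.surjective π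
    obtain rfl : p = 0 := by simpa [← h] using hπ0
    exact ⟨ρ, h.symm⟩
  have hcomp : (X ∘ σ) ∘ i.succAbove = (X ∘ (σ i).succAbove) ∘ ρ := by
    funext j
    have h := congrArg (σ i).cycleRange.symm (congrArg (· j.succ) hρ)
    simp only [hπ, Equiv.Perm.mul_apply, Equiv.Perm.inv_def, Equiv.symm_apply_apply,
      Equiv.Perm.decomposeFin_symm_apply_succ, Fin.cycleRange_symm_succ] at h
    simp [h]
  have hsign : (Equiv.Perm.sign ρ : ℝ)
      = (-1) ^ (σ i : ℕ) * (Equiv.Perm.sign σ : ℤ) * (-1) ^ (i : ℕ) := by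
    have h := congrArg Equiv.Perm.sign hρ
    simp only [hπ, map_mul, Equiv.Perm.sign_inv, Fin.sign_cycleRange,
      Equiv.Perm.decomposeFin.symm_sign, if_pos, one_mul] at h
    rw [← h]
    push_cast
    ring
  have hsq : (-1 : ℝ) ^ (i : ℕ) * (-1) ^ (i : ℕ) = 1 := by rw [← mul_pow]; norm_num
  rw [hcomp, hΦ.1, hsign]
  linear_combination
    ((-1 : ℝ) ^ (σ i : ℕ) * (Equiv.Perm.sign σ : ℤ) * Φ (X ∘ (σ i).succAbove)) * hsq

lemma IsAlternating.delTerm_comp_perm {n : ℕ} (hn : n + 1 = n + 1) {Φ : (Fin (n + 1) → E) → ℝ}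
    (hΦ : IsAlternating Φ) (σ : Equiv.Perm (Fin (n + 1 + 1))) (X : Fin (n + 1 + 1) → E)
    (Y : Fin n → E) (i : Fin (n + 1 + 1)) :
    delTerm hn Φ (X ∘ σ) Y i = (Equiv.Perm.sign σ : ℤ) * delTerm hn Φ X Y (σ i) := by
  rw [delTerm_eq, delTerm_eq, hΦ.neg_one_pow_mul_apply_comp_perm_succAbove]
  simp only [Function.comp_apply]
  ring

lemma IsAlternating.delTerm_comp_perm_right {n : ℕ} (hn : n + 1 = n + 1)
    {Φ : (Fin (n + 1) → E) → ℝ} (hΦ : IsAlternating Φ) (τ : Equiv.Perm (Fin n))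
    (X : Fin (n + 1 + 1) → E) (Y : Fin n → E) (i : Fin (n + 1 + 1)) :
    delTerm hn Φ X (Y ∘ τ) i = (Equiv.Perm.sign τ : ℤ) * delTerm hn Φ X Y i := by
  have hcons : (Fin.cons (X i) (Y ∘ τ) : Fin (n + 1) → E)
      = Fin.cons (X i) Y ∘ Equiv.Perm.decomposeFin.symm (0, τ) := by
    funext j
    refine Fin.cases ?_ (fun k => ?_) j <;> simp
  rw [delTerm_eq, delTerm_eq, hcons, hΦ.1]
  simp only [Equiv.Perm.decomposeFin.symm_sign, if_pos, one_mul]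
  ring

lemma delTerm_eq_sign {d n : ℕ} (hn : d = n + 1) {Φ χ : (Fin d → E) → ℝ}
    (hsign : ∀ x, Real.sign (Φ x) = χ x) (X : Fin (d + 1) → E) (Y : Fin n → E)
    (k : Fin (d + 1)) : delTerm hn χ X Y k = Real.sign (delTerm hn Φ X Y k) := by
  rw [delTerm, delTerm, Real.sign_mul, Real.sign_mul, hsign, hsign, Real.sign_neg_one_pow]

end Alternating

section SignBalanced

variable {ι : Type*}

/-- The condition imposed on the terms of each oriented tropical Plücker relation. -/
def IsSignBalanced (t : ι → ℝ) : Prop :=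
  (∀ i, t i = 0) ∨ ∃ ip im, 0 < t ip ∧ t im < 0 ∧ (∀ k, |t k| ≤ t ip) ∧ ∀ k, |t k| ≤ -t im

lemma IsSignBalanced.neg {t : ι → ℝ} (ht : IsSignBalanced t) : IsSignBalanced (-t) := by
  rcases ht with h0 | ⟨ip, im, hp, hm, hip, him⟩
  · exact .inl fun i => by simp [h0 i]
  · exact .inr ⟨im, ip, by simpa using hm, by simpa using hp, by simpa using him,
      by simpa using hip⟩

lemma IsSignBalanced.comp_equiv {ι' : Type*} {t : ι → ℝ} (ht : IsSignBalanced t) (σ : ι' ≃ ι) :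
    IsSignBalanced (t ∘ σ) := by
  rcases ht with h0 | ⟨ip, im, hp, hm, hip, him⟩
  · exact .inl fun i => h0 (σ i)
  · exact .inr ⟨σ.symm ip, σ.symm im, by simpa using hp, by simpa using hm,
      fun k => by simpa using hip (σ k), fun k => by simpa using him (σ k)⟩

lemma IsSignBalanced.units_mul_comp {ι' : Type*} {t : ι → ℝ} (ht : IsSignBalanced t) (ε : ℤˣ)
    (σ : ι' ≃ ι) : IsSignBalanced fun i => (ε : ℝ) * t (σ i) := by
  rcases Int.units_eq_one_or ε with rfl | rfl
  · simpa [Function.comp_def] using ht.comp_equiv σ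
  · simpa [Function.comp_def] using ht.neg.comp_equiv σ

/-- Such a `t` is supported on `{a, b}`, with `t b = -t a`. -/
lemma isSignBalanced_of_swap [DecidableEq ι] {t : ι → ℝ} {a b : ι} (hab : a ≠ b)
    (ht : ∀ i, t (Equiv.swap a b i) = -t i) : IsSignBalanced t := by
  have hb : t b = -t a := by simpa using ht a
  have hzero : ∀ i, i ≠ a → i ≠ b → t i = 0 := fun i hia hib => by
    have := ht i
    rw [Equiv.swap_apply_of_ne_of_ne hia hib] at this
    linarith
  have hle : ∀ k, |t k| ≤ |t a| := fun k => by
    rcases eq_or_ne k a with rfl | hka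
    · rfl
    rcases eq_or_ne k b with rfl | hkb
    · rw [hb, abs_neg]
    · simp [hzero k hka hkb]
  rcases lt_trichotomy (t a) 0 with ha | ha | ha
  · refine .inr ⟨b, a, by linarith, ha, fun k => ?_, fun k => ?_⟩ <;>
      linarith [hle k, abs_of_neg ha]
  · refine .inl fun k => abs_eq_zero.1 (le_antisymm ?_ (abs_nonneg _))
    simpa [ha] using hle k
  · refine .inr ⟨a, b, ha, by linarith, fun k => ?_, fun k => ?_⟩ <;>
      linarith [hle k, abs_of_pos ha]

end SignBalanced

section SortedReduction

variable {E : Type*} [LinearOrder E] {m : ℕ}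

/-- Repeated entries make a relation trivial; otherwise sorting `X` and `Y` permutes its terms and
multiplies them all by the same sign. -/
lemma IsAlternating.isSignBalanced_delTerm {Φ : (Fin (m + 1) → E) → ℝ} (hΦ : IsAlternating Φ)
    (hsorted : ∀ (X Y : Finset E) (hX : X.card = m + 1 + 1) (hY : Y.card = m),
      IsSignBalanced (delTerm rfl Φ (finsetTuple X hX) (finsetTuple Y hY)))
    (X : Fin (m + 1 + 1) → E) (Y : Fin m → E) : IsSignBalanced (delTerm rfl Φ X Y) := by
  by_cases hY : Function.Injective Y
  · by_cases hX : Function.Injective X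
    · obtain ⟨σ, hσ⟩ := exists_perm_eq_finsetTuple_comp hX (card_image_univ_eq_iff.2 hX)
      obtain ⟨τ, hτ⟩ := exists_perm_eq_finsetTuple_comp hY (card_image_univ_eq_iff.2 hY)
      have key : delTerm rfl Φ X Y = fun i => ((Equiv.Perm.sign σ * Equiv.Perm.sign τ : ℤˣ) : ℝ)
          * delTerm rfl Φ (finsetTuple _ (card_image_univ_eq_iff.2 hX))
            (finsetTuple _ (card_image_univ_eq_iff.2 hY)) (σ i) := by
        funext i
        conv_lhs => rw [hσ, hτ]
        rw [hΦ.delTerm_comp_perm_right, hΦ.delTerm_comp_perm]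
        push_cast
        ring
      rw [key]
      exact (hsorted _ _ _ _).units_mul_comp _ σ
    · obtain ⟨a, b, hab, hne⟩ := Function.not_injective_iff.1 hX
      have hXswap : X ∘ Equiv.swap a b = X := by
        rw [Equiv.comp_swap_eq_update, hab, Function.update_eq_self, ← hab,
          Function.update_eq_self]
      refine isSignBalanced_of_swap hne fun i => ?_
      have h := hΦ.delTerm_comp_perm rfl (Equiv.swap a b) X Y (Equiv.swap a b i)
      rw [hXswap, Equiv.swap_apply_self, Equiv.Perm.sign_swap hne] at h
      rw [h]
      push_cast
      ring
  · refine .inl fun i => ?_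
    have hcons : ¬ Function.Injective (Fin.cons (X i) Y : Fin (m + 1) → E) := fun h =>
      hY (Fin.cons_injective_iff.1 h).2
    rw [delTerm_eq, hΦ.2 _ hcons, mul_zero]

end SortedReduction

section TropicalPlucker

variable {E : Type*} [LinearOrder E]

lemma tropOf_eq_top_iff {d : ℕ} {Φ : (Fin d → E) → ℝ} {B : Finset E} :
    tropOf Φ B = ⊤ ↔ evalOn Φ B = 0 := by
  rw [tropOf, negLogAbs_eq_iff, tropToReal_top, abs_eq_zero]

lemma argminSet_congr {φ ψ : Finset E → WithTop ℝ} {X Y : Finset E}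
    (h : ∀ a ∈ X \ Y, φ (X.erase a) = ψ (X.erase a) ∧ φ (insert a Y) = ψ (insert a Y)) :
    argminSet φ X Y = argminSet ψ X Y := by
  have hsum : ∀ a ∈ X \ Y, φ (X.erase a) + φ (insert a Y) = ψ (X.erase a) + ψ (insert a Y) :=
    fun a ha => by rw [(h a ha).1, (h a ha).2]
  ext a
  exact and_congr_right fun ha => forall₂_congr fun j hj => by rw [hsum a ha, hsum j hj]

variable {m : ℕ} {Φ : (Fin (m + 1) → E) → ℝ} {X Y : Finset E}

lemma IsAlternating.delTerm_finsetTuple_eq_zero_of_mem (hΦ : IsAlternating Φ)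
    (hX : X.card = m + 1 + 1) (hY : Y.card = m) {k : Fin (m + 1 + 1)}
    (hk : finsetTuple X hX k ∈ Y) : delTerm rfl Φ (finsetTuple X hX) (finsetTuple Y hY) k = 0 := by
  obtain ⟨j, hj⟩ := exists_finsetTuple_eq hY hk
  have hcons : ¬ Function.Injective
      (Fin.cons (finsetTuple X hX k) (finsetTuple Y hY) : Fin (m + 1) → E) := fun h =>
    (Fin.cons_injective_iff.1 h).1 ⟨j, hj⟩
  rw [delTerm_eq, hΦ.2 _ hcons, mul_zero]

lemma IsAlternating.abs_delTerm_finsetTuple (hΦ : IsAlternating Φ) (hX : X.card = m + 1 + 1)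
    (hY : Y.card = m) (k : Fin (m + 1 + 1)) :
    |delTerm rfl Φ (finsetTuple X hX) (finsetTuple Y hY) k|
      = tropToReal (tropOf Φ (X.erase (finsetTuple X hX k))
          + tropOf Φ (insert (finsetTuple X hX k) Y)) := by
  rw [delTerm_eq, abs_mul, abs_mul, abs_pow, abs_neg, abs_one, one_pow, one_mul,
    hΦ.abs_apply_eq_tropToReal, hΦ.abs_apply_eq_tropToReal, image_finsetTuple_comp_succAbove,
    image_cons, image_finsetTuple, tropToReal_add]

/-- Since `|Φ| = e^{-tropOf Φ}`, minimizing `tropOf Φ (X.erase x) + tropOf Φ (insert x Y)` is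
maximizing the absolute value of the corresponding Plücker term. -/
lemma IsAlternating.mem_argminSet_tropOf_iff (hΦ : IsAlternating Φ) (hX : X.card = m + 1 + 1)
    (hY : Y.card = m) {k : Fin (m + 1 + 1)}
    (hk : delTerm rfl Φ (finsetTuple X hX) (finsetTuple Y hY) k ≠ 0) :
    finsetTuple X hX k ∈ argminSet (tropOf Φ) X Y ↔
      ∀ j, |delTerm rfl Φ (finsetTuple X hX) (finsetTuple Y hY) j|
        ≤ |delTerm rfl Φ (finsetTuple X hX) (finsetTuple Y hY) k| := by
  constructor
  · rintro ⟨-, hmin⟩ j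
    by_cases hj : finsetTuple X hX j ∈ Y
    · rw [hΦ.delTerm_finsetTuple_eq_zero_of_mem hX hY hj, abs_zero]
      exact abs_nonneg _
    · rw [hΦ.abs_delTerm_finsetTuple, hΦ.abs_delTerm_finsetTuple]
      exact tropToReal_le_tropToReal.2 (hmin _ (mem_sdiff.2 ⟨finsetTuple_mem _ _ _, hj⟩))
  · intro hmax
    refine ⟨mem_sdiff.2 ⟨finsetTuple_mem _ _ _,
      mt (hΦ.delTerm_finsetTuple_eq_zero_of_mem hX hY) hk⟩, fun x hx => ?_⟩
    obtain ⟨j, rfl⟩ := exists_finsetTuple_eq hX (mem_sdiff.1 hx).1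
    rw [← tropToReal_le_tropToReal, ← hΦ.abs_delTerm_finsetTuple, ← hΦ.abs_delTerm_finsetTuple]
    exact hmax j

lemma IsOrientedTP.isTropPlucker_tropOf (hΦ : IsOrientedTP (m + 1) Φ) :
    IsTropPlucker (m + 1) (tropOf Φ) := by
  obtain ⟨hΦalt, ⟨x, hx⟩, hrel⟩ := hΦ
  have hxinj : Function.Injective x := by
    by_contra h
    exact hx (hΦalt.2 x h)
  refine ⟨⟨univ.image x, card_image_univ_eq_iff.2 hxinj, ?_⟩, fun X Y hX hY => ?_⟩
  · rw [Ne, tropOf_eq_top_iff, ← hΦalt.apply_eq_zero_iff]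
    exact hx
  replace hY : Y.card = m := by omega
  rcases hrel m rfl (finsetTuple X hX) (finsetTuple Y hY) with h0 | ⟨ip, im, hp, hm, hip, him⟩
  · have htop : ∀ a ∈ X \ Y, tropOf Φ (X.erase a) + tropOf Φ (insert a Y) = ⊤ := by
      intro a ha
      obtain ⟨k, rfl⟩ := exists_finsetTuple_eq hX (mem_sdiff.1 ha).1
      rw [← tropToReal_eq_zero_iff, ← hΦalt.abs_delTerm_finsetTuple hX hY, h0, abs_zero]
    have hcard : 1 < (X \ Y).card := by
      have := le_card_sdiff Y X
      omega
    obtain ⟨a, ha, b, hb, hab⟩ := one_lt_card.1 hcard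
    exact ⟨a, ⟨ha, fun j hj => by rw [htop j hj]; exact le_top⟩,
      b, ⟨hb, fun j hj => by rw [htop j hj]; exact le_top⟩, hab⟩
  · refine ⟨_, (hΦalt.mem_argminSet_tropOf_iff hX hY hp.ne').2
      fun j => (hip j).trans (le_abs_self _), _, (hΦalt.mem_argminSet_tropOf_iff hX hY hm.ne).2
      fun j => (him j).trans (neg_le_abs _), fun h => ?_⟩
    rw [finsetTuple_injective X hX h] at hp
    exact hm.not_gt hp

end TropicalPlucker

section Directions

variable {E : Type*} [LinearOrder E]

theorem initCompat_of_mem_Dset {m : ℕ} {χ Φ : (Fin (m + 1) → E) → ℝ}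
    {I : Finset E → Finset E → Set E} (hΦ : Φ ∈ Dset (m + 1) χ I) : InitCompat (m + 1) I χ := by
  obtain ⟨hOTP, hsign, hargmin⟩ := hΦ
  have hzero : ∀ B, evalOn Φ B = 0 ↔ evalOn χ B = 0 := fun B => by
    unfold evalOn
    split_ifs
    · rw [← hsign, Real.sign_eq_zero_iff]
    · simp
  refine ⟨⟨tropOf Φ, hOTP.isTropPlucker_tropOf, fun B _ => by rw [Ne, tropOf_eq_top_iff, hzero],
    hargmin⟩, fun n hn X Y hX hY => ?_⟩
  obtain rfl : n = m := by omega
  rcases hOTP.2.2 n hn (finsetTuple X hX) (finsetTuple Y hY)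
    with h0 | ⟨ip, im, hp, hm, hip, him⟩
  · exact .inl fun k => by rw [delTerm_eq_sign hn hsign, h0, Real.sign_zero]
  · rw [← hargmin X Y hX (by omega)]
    exact .inr ⟨ip, im,
      (hOTP.1.mem_argminSet_tropOf_iff hX hY hp.ne').2 fun j => (hip j).trans (le_abs_self _),
      (hOTP.1.mem_argminSet_tropOf_iff hX hY hm.ne).2 fun j => (him j).trans (neg_le_abs _),
      by rw [delTerm_eq_sign hn hsign, Real.sign_eq_one_iff.2 hp],
      by rw [delTerm_eq_sign hn hsign, Real.sign_eq_neg_one_iff.2 hm]⟩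

def orientedLift {d : ℕ} (χ : (Fin d → E) → ℝ) (φ : Finset E → WithTop ℝ) :
    (Fin d → E) → ℝ :=
  fun x => χ x * tropToReal (φ (univ.image x))

variable {d : ℕ} {χ : (Fin d → E) → ℝ} {φ : Finset E → WithTop ℝ}

lemma isAlternating_orientedLift (hχ : IsAlternating χ) : IsAlternating (orientedLift χ φ) := by
  refine ⟨fun σ x => ?_, fun x hx => by rw [orientedLift, hχ.2 x hx, zero_mul]⟩
  rw [orientedLift, orientedLift, ← image_image, image_univ_equiv, hχ.1, mul_assoc]

lemma evalOn_orientedLift (B : Finset E) :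
    evalOn (orientedLift χ φ) B = evalOn χ B * tropToReal (φ B) := by
  unfold evalOn
  split_ifs with hB
  · rw [orientedLift, image_finsetTuple]
  · rw [zero_mul]

section Support

variable (hsupp : ∀ B : Finset E, B.card = d → (φ B ≠ ⊤ ↔ evalOn χ B ≠ 0))
include hsupp

lemma tropOf_orientedLift (hvals : ∀ x, χ x = -1 ∨ χ x = 0 ∨ χ x = 1) {B : Finset E}
    (hB : B.card = d) : tropOf (orientedLift χ φ) B = φ B := by
  rw [tropOf, evalOn_orientedLift, negLogAbs_eq_iff, abs_mul, abs_of_nonneg (tropToReal_nonneg _)]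
  by_cases hφ : φ B = ⊤
  · rw [hφ, tropToReal_top, mul_zero]
  · have hχB := (hsupp B hB).1 hφ
    rw [evalOn, dif_pos hB] at hχB ⊢
    rcases hvals (finsetTuple B hB) with h | h | h <;> simp_all

lemma sign_orientedLift (hvals : ∀ x, χ x = -1 ∨ χ x = 0 ∨ χ x = 1) (hχ : IsAlternating χ)
    (x : Fin d → E) : Real.sign (orientedLift χ φ x) = χ x := by
  rw [orientedLift, Real.sign_mul]
  by_cases hx : χ x = 0
  · rw [hx, Real.sign_zero, zero_mul]
  have hxinj : Function.Injective x := by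
    by_contra h
    exact hx (hχ.2 x h)
  have hφ : φ (univ.image x) ≠ ⊤ :=
    (hsupp _ (card_image_univ_eq_iff.2 hxinj)).2 (mt (hχ.apply_eq_zero_iff x).2 hx)
  rw [Real.sign_of_pos (tropToReal_pos hφ), mul_one]
  rcases hvals x with h | h | h <;> simp_all [Real.sign_one, Real.sign_neg]

lemma argminSet_tropOf_orientedLift (hvals : ∀ x, χ x = -1 ∨ χ x = 0 ∨ χ x = 1)
    {X Y : Finset E} (hX : X.card = d + 1) (hY : Y.card + 1 = d) :
    argminSet (tropOf (orientedLift χ φ)) X Y = argminSet φ X Y := by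
  refine argminSet_congr fun a ha =>
    ⟨tropOf_orientedLift hsupp hvals ?_, tropOf_orientedLift hsupp hvals ?_⟩
  · rw [card_erase_of_mem (mem_sdiff.1 ha).1, hX, Nat.add_sub_cancel]
  · rw [card_insert_of_notMem (mem_sdiff.1 ha).2, hY]

end Support

theorem InitCompat.nonempty_Dset {m : ℕ} {χ : (Fin (m + 1) → E) → ℝ}
    {I : Finset E → Finset E → Set E} (hχ : IsChirotope (m + 1) χ)
    (hcompat : InitCompat (m + 1) I χ) : (Dset (m + 1) χ I).Nonempty := by
  obtain ⟨⟨φ, hφ, hsupp, hargmin⟩, hsigns⟩ := hcompat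
  obtain ⟨hvals, hχalt, -, -⟩ := hχ
  have hΦalt : IsAlternating (orientedLift χ φ) := isAlternating_orientedLift hχalt
  have hsign := sign_orientedLift hsupp hvals hχalt
  have hargmin' : ∀ X Y : Finset E, X.card = m + 1 + 1 → Y.card = m + 1 - 1 →
      argminSet (tropOf (orientedLift χ φ)) X Y = I X Y := fun X Y hX hY => by
    rw [argminSet_tropOf_orientedLift hsupp hvals hX (by omega), hargmin X Y hX hY]
  refine ⟨orientedLift χ φ, ⟨hΦalt, ?_, fun n hn X Y => ?_⟩, hsign, hargmin'⟩
  · obtain ⟨B, hB, hφB⟩ := hφ.1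
    refine ⟨finsetTuple B hB, fun h => (hsupp B hB).1 hφB ?_⟩
    rw [evalOn, dif_pos hB, ← hsign, h, Real.sign_zero]
  obtain rfl : n = m := by omega
  refine hΦalt.isSignBalanced_delTerm (fun X Y hX hY => ?_) X Y
  rcases hsigns _ rfl X Y hX hY with h0 | ⟨kp, km, hkp, hkm, hp, hm⟩
  · exact .inl fun k => by rw [← Real.sign_eq_zero_iff, ← delTerm_eq_sign rfl hsign, h0]
  · rw [delTerm_eq_sign rfl hsign, Real.sign_eq_one_iff] at hp
    rw [delTerm_eq_sign rfl hsign, Real.sign_eq_neg_one_iff] at hm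
    rw [← hargmin' X Y hX (by omega)] at hkp hkm
    exact .inr ⟨kp, km, hp, hm,
      fun j => ((hΦalt.mem_argminSet_tropOf_iff hX hY hp.ne').1 hkp j).trans_eq (abs_of_pos hp),
      fun j => ((hΦalt.mem_argminSet_tropOf_iff hX hY hm.ne).1 hkm j).trans_eq (abs_of_neg hm)⟩

end Directions

theorem statement11_general {E : Type*} [LinearOrder E] (d : ℕ) (hd : 1 ≤ d)
    (χ : (Fin d → E) → ℝ) (hχ : IsChirotope d χ)
    (I : Finset E → Finset E → Set E) :
    (Dset d χ I).Nonempty ↔ InitCompat d I χ := by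
  obtain ⟨m, rfl⟩ : ∃ m, d = m + 1 := ⟨d - 1, by omega⟩
  exact ⟨fun ⟨_, hΦ⟩ => initCompat_of_mem_Dset hΦ, fun h => h.nonempty_Dset hχ⟩

theorem statement11 {E : Type*} [Fintype E] [LinearOrder E] (d : ℕ) (hd : 1 ≤ d)
    (χ : (Fin d → E) → ℝ) (hχ : IsChirotope d χ)
    (I : Finset E → Finset E → Set E) (hI : ∀ X Y : Finset E, I X Y ⊆ ↑(X \ Y)) :
    (Dset d χ I).Nonempty ↔ InitCompat d I χ :=
  statement11_general d hd χ hχ I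
end
end

section
/- Let n ≥ 1 and let 𝕋 = ℝ ∪ {∞} with the topology making x ↦ e^{−x} a homeomorphism onto [0,∞). The additive group (ℝ,+) acts on 𝕋^n ∖ {(∞,…,∞)} by λ·(x₁,…,xₙ) = (x₁+λ,…,xₙ+λ) (with ∞+λ = ∞). The quotient space (𝕋^n ∖ {(∞,…,∞)})/ℝ, with the quotient topology, is homeomorphic to the standard (n−1)-simplex Δ^{n−1} = {t ∈ ℝ^n : tᵢ ≥ 0 for all i, Σᵢ tᵢ = 1}. -/
open Finset

/- The normalised exponential coordinates `x ↦ (e^{-xᵢ} / Σⱼ e^{-xⱼ})ᵢ` are invariant under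
translation and land in the simplex; coordinatewise `t ↦ -log t` (with `-log 0 = ∞`) is a
continuous section of them, and it meets every translation class, since normalising `x` only
translates it by `log Σⱼ e^{-xⱼ}`. -/

def Homeomorph.quotientOfSection {X Y : Type*} [TopologicalSpace X] [TopologicalSpace Y]
    (s : Setoid X) (f : X → Y) (hf : Continuous f) (hfs : ∀ a b, a ≈ b → f a = f b)
    (g : Y → X) (hg : Continuous g) (hfg : Function.RightInverse g f)
    (hgf : ∀ x, g (f x) ≈ x) : Quotient s ≃ₜ Y where
  toFun := Quotient.lift f hfs
  invFun y := Quotient.mk s (g y)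
  left_inv q := q.inductionOn fun x => Quotient.sound (hgf x)
  right_inv := hfg
  continuous_toFun := hf.quotient_lift hfs
  continuous_invFun := continuous_quotient_mk'.comp hg

namespace TropicalProjective

noncomputable section

lemma tropToReal_nonneg (w : WithTop ℝ) : 0 ≤ tropToReal w := by
  induction w using WithTop.recTopCoe with
  | top => exact le_rfl
  | coe r => exact (Real.exp_pos _).le

lemma tropToReal_pos {w : WithTop ℝ} (hw : w ≠ ⊤) : 0 < tropToReal w := by
  induction w using WithTop.recTopCoe with
  | top => exact absurd rfl hw
  | coe r => exact Real.exp_pos _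

lemma tropToReal_injective : Function.Injective tropToReal := by
  intro v w h
  induction v using WithTop.recTopCoe <;> induction w using WithTop.recTopCoe
  · rfl
  · exact absurd h (Real.exp_pos _).ne
  · exact absurd h (Real.exp_pos _).ne'
  · exact congrArg _ (neg_injective (Real.exp_injective h))

lemma tropToReal_add_coe (w : WithTop ℝ) (c : ℝ) :
    tropToReal (w + c) = tropToReal w * Real.exp (-c) := by
  induction w using WithTop.recTopCoe with
  | top => exact (zero_mul _).symm
  | coe r =>
    change Real.exp (-(r + c)) = Real.exp (-r) * Real.exp (-c)
    rw [neg_add, Real.exp_add]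

def realToTrop (t : ℝ) : WithTop ℝ :=
  if t = 0 then ⊤ else ((-Real.log t : ℝ) : WithTop ℝ)

lemma tropToReal_realToTrop {t : ℝ} (ht : 0 ≤ t) : tropToReal (realToTrop t) = t := by
  unfold realToTrop
  split_ifs with h0
  · exact h0.symm
  · change Real.exp (- -Real.log t) = t
    rw [neg_neg, Real.exp_log (lt_of_le_of_ne ht (Ne.symm h0))]

lemma realToTrop_ne_top {t : ℝ} (ht : t ≠ 0) : realToTrop t ≠ ⊤ := by
  simp [realToTrop, ht]

variable {n : ℕ}

def expSum (x : Fin n → WithTop ℝ) : ℝ := ∑ i, tropToReal (x i)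

lemma expSum_pos {x : Fin n → WithTop ℝ} (hx : ∃ i, x i ≠ ⊤) : 0 < expSum x := by
  obtain ⟨i, hi⟩ := hx
  exact Finset.sum_pos' (fun j _ => tropToReal_nonneg _)
    ⟨i, Finset.mem_univ i, tropToReal_pos hi⟩

lemma expSum_add_coe (x : Fin n → WithTop ℝ) (c : ℝ) :
    expSum (fun i => x i + c) = expSum x * Real.exp (-c) := by
  simp only [expSum, tropToReal_add_coe, Finset.sum_mul]

abbrev NonTop (n : ℕ) := {x : Fin n → WithTop ℝ // ∃ i, x i ≠ ⊤}

def normalize (x : NonTop n) : stdSimplex ℝ (Fin n) :=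
  ⟨fun i => tropToReal (x.1 i) / expSum x.1,
    fun i => div_nonneg (tropToReal_nonneg _) (expSum_pos x.2).le,
    by rw [← Finset.sum_div]; exact div_self (expSum_pos x.2).ne'⟩

def ofSimplex (t : stdSimplex ℝ (Fin n)) : NonTop n :=
  ⟨fun i => realToTrop (t.1 i), by
    obtain ⟨i, hi⟩ := Finset.exists_ne_zero_of_sum_ne_zero (t.2.2.trans_ne one_ne_zero)
    exact ⟨i, realToTrop_ne_top hi.2⟩⟩

lemma tropToReal_ofSimplex (t : stdSimplex ℝ (Fin n)) (i : Fin n) :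
    tropToReal ((ofSimplex t).1 i) = t.1 i :=
  tropToReal_realToTrop (t.2.1 i)

lemma normalize_eq_of_equiv (x y : NonTop n) (hxy : tropProjSetoid n x y) :
    normalize x = normalize y := by
  obtain ⟨c, hc⟩ := hxy
  have hy : y.1 = fun i => x.1 i + c := funext hc
  ext i
  simp only [normalize, hy, expSum_add_coe, tropToReal_add_coe,
    mul_div_mul_right _ _ (Real.exp_ne_zero _)]

lemma normalize_ofSimplex (t : stdSimplex ℝ (Fin n)) : normalize (ofSimplex t) = t := by
  have hsum : expSum (ofSimplex t).1 = 1 := by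
    simp only [expSum, tropToReal_ofSimplex]
    exact t.2.2
  ext i
  simp only [normalize, hsum, tropToReal_ofSimplex, div_one]

lemma ofSimplex_normalize_equiv (x : NonTop n) :
    tropProjSetoid n (ofSimplex (normalize x)) x := by
  refine ⟨-Real.log (expSum x.1), fun i => tropToReal_injective ?_⟩
  rw [tropToReal_add_coe, tropToReal_ofSimplex, neg_neg, Real.exp_log (expSum_pos x.2)]
  exact (div_mul_cancel₀ _ (expSum_pos x.2).ne').symm

variable [TopologicalSpace (WithTop ℝ)]

lemma continuous_normalize (h : Continuous tropToReal) : Continuous (normalize (n := n)) := by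
  have hcoord (i : Fin n) : Continuous fun x : NonTop n => tropToReal (x.1 i) :=
    h.comp ((continuous_apply i).comp continuous_subtype_val)
  refine Continuous.subtype_mk (continuous_pi fun i => (hcoord i).div ?_ ?_) _
  · exact continuous_finsetSum _ fun j _ => hcoord j
  · exact fun x => (expSum_pos x.2).ne'

lemma continuous_ofSimplex (h : Topology.IsInducing tropToReal) :
    Continuous (ofSimplex (n := n)) := by
  have hcoord (i : Fin n) : Continuous fun t : stdSimplex ℝ (Fin n) => (ofSimplex t).1 i := by
    refine h.continuous_iff.mpr ?_
    simp only [Function.comp_def, tropToReal_ofSimplex]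
    exact (continuous_apply i).comp continuous_subtype_val
  exact Continuous.subtype_mk (continuous_pi hcoord) _

end

end TropicalProjective

theorem statement16_general (n : ℕ) :
    letI : TopologicalSpace (WithTop ℝ) := TopologicalSpace.induced tropToReal inferInstance
    Nonempty (Quotient (tropProjSetoid n) ≃ₜ ↥(stdSimplex ℝ (Fin n))) := by
  let _ : TopologicalSpace (WithTop ℝ) := TopologicalSpace.induced tropToReal inferInstance
  have hind : Topology.IsInducing tropToReal := .induced tropToReal
  open TropicalProjective in
  exact ⟨Homeomorph.quotientOfSection (tropProjSetoid n) normalize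
    (continuous_normalize hind.continuous) normalize_eq_of_equiv ofSimplex
    (continuous_ofSimplex hind) normalize_ofSimplex ofSimplex_normalize_equiv⟩

theorem statement16 (n : ℕ) (hn : 1 ≤ n) :
    letI : TopologicalSpace (WithTop ℝ) := TopologicalSpace.induced tropToReal inferInstance
    Nonempty (Quotient (tropProjSetoid n) ≃ₜ ↥(stdSimplex ℝ (Fin n))) :=
  statement16_general n
end
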